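/- arXiv:1804.01045 — 2 statements merged into one kernel-verified Lean document; each statement's English description precedes it below -/
import Mathlib

section
/- Let C be a spanning cotree of G rooted at a face r, and define the dual flow z as follows: z(d) = 0 if the edge of d is not in C; if p↑q is the successor dart of dual vertex p in C, then z(p↑q) equals the number of descendants of p in C (including p itself), and z of its reversal is the negation of that number. Then ∂*z(q) = −1 for every face q ≠ r and ∂*z(r) = |F| − 1; in particular, z is a drainage with sink r. -/
/-!
Common combinatorial framework for graphs cellularly embedded on orientable surfaces,
following Erickson, Fox, and Lkhamsuren, "Holiest Minimum-Cost Paths and Flows in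
Surface Graphs".

A graph `G = (V, E, F)` embedded on an orientable surface is given combinatorially by a
finite set of darts together with a fixed-point-free involution `rev` (whose orbits are
the edges) and a permutation `next` (= π, whose orbits are the vertices); the faces are
the orbits of `rev ∘ next`, and the genus `g` is determined by Euler's formula
`|V| - |E| + |F| = 2 - 2g`.
-/

noncomputable section

open Finset

open scoped Classical

set_option maxHeartbeats 1000000

structure CombSurface where
  /-- the darts -/
  D : Type
  /-- the vertices (orbits of `next`) -/
  V : Type
  /-- the faces (orbits of `rev ∘ next`) -/
  F : Type
  [finD : Fintype D]
  [deqD : DecidableEq D]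
  [finV : Fintype V]
  [deqV : DecidableEq V]
  [finF : Fintype F]
  [deqF : DecidableEq F]
  /-- the reversal involution on darts; its orbits are the edges -/
  rev : D → D
  rev_invol : ∀ d, rev (rev d) = d
  rev_ne : ∀ d, rev d ≠ d
  /-- the rotation permutation π: orbits are the darts directed into a common vertex,
  in counterclockwise order -/
  next : D → D
  next_bij : Function.Bijective next
  /-- the head of a dart: the orbit map of `next` -/
  head : D → V
  head_next : ∀ d, head (next d) = head d
  head_orbit : ∀ d₁ d₂, head d₁ = head d₂ → ∃ n : ℕ, next^[n] d₁ = d₂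
  head_surj : Function.Surjective head
  /-- the face to the left of a dart: the orbit map of `rev ∘ next` -/
  left : D → F
  left_step : ∀ d, left (rev (next d)) = left d
  left_orbit : ∀ d₁ d₂, left d₁ = left d₂ → ∃ n : ℕ, (fun x => rev (next x))^[n] d₁ = d₂
  left_surj : Function.Surjective left
  /-- the genus -/
  g : ℕ
  /-- Euler's formula `|V| - |E| + |F| = 2 - 2g` (with `2|E| = |D|`) -/
  euler : 2 * (Fintype.card V : ℤ) + 2 * (Fintype.card F : ℤ) - (Fintype.card D : ℤ)
      = 4 - 4 * (g : ℤ)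

attribute [instance] CombSurface.finD CombSurface.deqD CombSurface.finV
  CombSurface.deqV CombSurface.finF CombSurface.deqF

namespace CombSurface

variable (S : CombSurface)

/-- The tail of a dart. -/
def tail (d : S.D) : S.V := S.head (S.rev d)

/-- The face to the right of a dart.  The dual dart of `d` crosses `d` from the face on
its left to the face on its right; i.e. the dual dart of `d` has tail `S.left d` and
head `S.right d`. -/
def right (d : S.D) : S.F := S.left (S.rev d)

/-- The imbalance of a flow `f` at a vertex `v`: the net flow into `v`. -/
def imbalance (f : S.D → ℝ) (v : S.V) : ℝ :=
  ∑ d ∈ univ.filter (fun d => S.head d = v), f d -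
    ∑ d ∈ univ.filter (fun d => S.tail d = v), f d

/-- `f` is the boundary flow of the potential function `α` on the faces. -/
def IsBoundary (f : S.D → ℝ) (α : S.F → ℝ) : Prop :=
  ∀ d, f d - f (S.rev d) = α (S.right d) - α (S.left d)

/-- The dual imbalance of a dual flow `z` at a face `p`: the sum of `z` over all darts
whose dual darts have head `p`. -/
def dualImbalance (z : S.D → ℝ) (p : S.F) : ℝ :=
  ∑ d ∈ univ.filter (fun d => S.right d = p), z d

/-- A drainage with sink `r`: an antisymmetric dual flow whose dual imbalance is negative
at every face other than `r`. -/
def IsDrainage (z : S.D → ℝ) (r : S.F) : Prop :=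
  (∀ d, z (S.rev d) = - z d) ∧ ∀ q, q ≠ r → S.dualImbalance z q < 0

/-- A set of darts closed under reversal (i.e. a set of edges). -/
def RevClosed (A : Finset S.D) : Prop := ∀ d ∈ A, S.rev d ∈ A

/-- The edge set `A` connects all vertices of the primal graph. -/
def PrimalConnected (A : Finset S.D) : Prop :=
  ∀ v w : S.V, Relation.ReflTransGen (fun a b => ∃ d ∈ A, S.tail d = a ∧ S.head d = b) v w

/-- The edge set `A` connects all vertices of the dual graph (i.e. the faces). -/
def DualConnected (A : Finset S.D) : Prop :=
  ∀ p q : S.F, Relation.ReflTransGen (fun a b => ∃ d ∈ A, S.left d = a ∧ S.right d = b) p q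

/-- A spanning tree of `G`: a connected spanning set of edges with `|V| - 1` edges. -/
def IsSpanningTree (A : Finset S.D) : Prop :=
  S.RevClosed A ∧ S.PrimalConnected A ∧ A.card = 2 * (Fintype.card S.V - 1)

/-- A spanning cotree of `G`: a set of edges forming a spanning tree of the dual graph. -/
def IsSpanningCotree (A : Finset S.D) : Prop :=
  S.RevClosed A ∧ S.DualConnected A ∧ A.card = 2 * (Fintype.card S.F - 1)

/-- The clockwise neighborhood `∂⁻(F')` of a set of faces: all darts whose dual darts
have tail outside `F'` and head inside `F'`. -/
def cwBoundary (F' : Finset S.F) : Finset S.D :=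
  univ.filter fun d => S.left d ∉ F' ∧ S.right d ∈ F'

end CombSurface

/-- A tree–cotree decomposition of `G`: a partition of the edges into a spanning tree `T`,
a spanning cotree `C`, and a set `L` of leftover edges. -/
structure TreeCotree (S : CombSurface) where
  T : Finset S.D
  L : Finset S.D
  C : Finset S.D
  tree : S.IsSpanningTree T
  cotree : S.IsSpanningCotree C
  revL : S.RevClosed L
  disjTL : Disjoint T L
  disjTC : Disjoint T C
  disjLC : Disjoint L C
  cover : T ∪ L ∪ C = Finset.univ

/-- Homology signature data: a tree–cotree decomposition `(T, L, C)` together with an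
ordering `ell 1, …, ell 2g` of (oriented) leftover edges of `L` and, for each `i`, the
oriented dual fundamental cycle `cyc i` of the edge of `ell i` with the cotree `C`,
represented as the `{-1,0,1}`-valued dual circulation supported on `C + ell i` that
traverses the dart `ell i` (positively).  The homology signature of a dart `d` is the
integer vector `[d] = fun i => cyc i d`. -/
structure HomologyBasis (S : CombSurface) extends TreeCotree S where
  /-- the `i`-th leftover edge, oriented -/
  ell : Fin (2 * S.g) → S.D
  ell_mem : ∀ i, ell i ∈ L
  ell_inj : ∀ i j, (ell i = ell j ∨ ell i = S.rev (ell j)) → i = j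
  ell_cover : ∀ d ∈ L, ∃ i, d = ell i ∨ d = S.rev (ell i)
  /-- the oriented dual fundamental cycle of `ell i` with the cotree `C`,
  as a dual circulation -/
  cyc : Fin (2 * S.g) → S.D → ℤ
  cyc_antisym : ∀ i d, cyc i (S.rev d) = - cyc i d
  cyc_le_one : ∀ i d, |cyc i d| ≤ 1
  cyc_circ : ∀ i p, (∑ d ∈ univ.filter (fun d => S.right d = p), cyc i d) = 0
  cyc_supp : ∀ i d, cyc i d ≠ 0 → d ∈ C ∨ d = ell i ∨ d = S.rev (ell i)
  cyc_ell : ∀ i, cyc i (ell i) = 1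

/-- The homology signature `[f]` of a flow `f`: `[f] = ∑ d, f d • [d]`. -/
def flowSig (S : CombSurface) (H : HomologyBasis S) (f : S.D → ℝ) : Fin (2 * S.g) → ℝ :=
  fun i => ∑ d, f d * (H.cyc i d : ℝ)

/-- Strict lexicographic comparison of cost vectors. -/
def lexLt {n : ℕ} (a b : Fin n → ℝ) : Prop :=
  ∃ i, (∀ j, j < i → a j = b j) ∧ a i < b i

/-- Lexicographic comparison of cost vectors. -/
def lexLe {n : ℕ} (a b : Fin n → ℝ) : Prop := lexLt a b ∨ a = b

/-- The perturbed cost of a dart under the full lexicographic perturbation scheme: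
`c'(d) = (c(d), 1) ++ [d] ++ (z(d))`. -/
def dartCostFull (S : CombSurface) (H : HomologyBasis S) (z : S.D → ℝ) (c : S.D → ℝ)
    (d : S.D) : Fin (2 * S.g + 3) → ℝ :=
  Fin.cons (c d) (Fin.cons 1 (Fin.snoc (fun i => (H.cyc i d : ℝ)) (z d)))

/-- The perturbed cost of a dart under the modified lexicographic perturbation scheme
(no `+1` component): `c'(d) = (c(d)) ++ [d] ++ (z(d))`. -/
def dartCostMod (S : CombSurface) (H : HomologyBasis S) (z : S.D → ℝ) (c : S.D → ℝ)
    (d : S.D) : Fin (2 * S.g + 2) → ℝ :=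
  Fin.cons (c d) (Fin.snoc (fun i => (H.cyc i d : ℝ)) (z d))

/-- The perturbed cost of a flow: `c'(f) = ∑ d, f d • c'(d)`. -/
def flowCostFull (S : CombSurface) (H : HomologyBasis S) (z : S.D → ℝ) (c : S.D → ℝ)
    (f : S.D → ℝ) : Fin (2 * S.g + 3) → ℝ :=
  ∑ d, f d • dartCostFull S H z c d

/-- The unperturbed part of a cost vector from the modified scheme (first component). -/
def basePart {g : ℕ} (w : Fin (2 * g + 2) → ℝ) : ℝ := w ⟨0, by omega⟩

/-- The homology part of a cost vector from the modified scheme (middle `2g` components). -/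
def homPart {g : ℕ} (w : Fin (2 * g + 2) → ℝ) : Fin (2 * g) → ℝ :=
  fun i => w ⟨(i : ℕ) + 1, by have := i.isLt; omega⟩

/-- The face part of a cost vector from the modified scheme (last component). -/
def facePart {g : ℕ} (w : Fin (2 * g + 2) → ℝ) : ℝ := w ⟨2 * g + 1, by omega⟩

/-- Feasibility of a flow with respect to dart capacities `μ` and vertex demands `b`. -/
def Feasible (S : CombSurface) (μ : S.D → ENNReal) (b : S.V → ℝ) (f : S.D → ℝ) : Prop :=
  (∀ d, 0 ≤ f d ∧ ENNReal.ofReal (f d) ≤ μ d) ∧ ∀ v, S.imbalance f v = b v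

/-- A minimum-cost feasible flow with respect to the perturbed costs `c'`, capacities `μ`,
and demands `b`, where costs are compared lexicographically. -/
def IsMinCostFlow (S : CombSurface) (H : HomologyBasis S) (z : S.D → ℝ) (c : S.D → ℝ)
    (μ : S.D → ENNReal) (b : S.V → ℝ) (f : S.D → ℝ) : Prop :=
  Feasible S μ b f ∧ ∀ f', Feasible S μ b f' →
    lexLe (flowCostFull S H z c f) (flowCostFull S H z c f')

/-- `IsWalk S s t P`: the list of darts `P` is a directed walk from `s` to `t`. -/
def IsWalk (S : CombSurface) : S.V → S.V → List S.D → Prop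
  | s, t, [] => s = t
  | s, t, d :: P => S.tail d = s ∧ IsWalk S (S.head d) t P

/-- `IsDualWalk S p q P`: the list of darts `P` is a directed walk from face `p` to face
`q` in the dual graph. -/
def IsDualWalk (S : CombSurface) : S.F → S.F → List S.D → Prop
  | p, q, [] => p = q
  | p, q, d :: P => S.left d = p ∧ IsDualWalk S (S.right d) q P

/-- The cost vector of a walk: the sum of the cost vectors of its darts. -/
def pathCost {n : ℕ} (S : CombSurface) (cp : S.D → Fin n → ℝ) (P : List S.D) :
    Fin n → ℝ :=
  (P.map cp).sum

/-- `P` is a lexicographically shortest directed walk from `s` to `t` with respect to the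
vector-valued dart costs `cp`. -/
def IsShortestWalk {n : ℕ} (S : CombSurface) (cp : S.D → Fin n → ℝ) (s t : S.V)
    (P : List S.D) : Prop :=
  IsWalk S s t P ∧ ∀ Q, IsWalk S s t Q → lexLe (pathCost S cp P) (pathCost S cp Q)

/-- A list of darts viewed as a flow: each dart receives the number of times it occurs. -/
def listFlow (S : CombSurface) (P : List S.D) : S.D → ℝ := fun d => (P.count d : ℝ)

/-- The parent map of a spanning cotree rooted at `r`, given the successor darts. -/
def parentOfSucc (S : CombSurface) (r : S.F) (succ : S.F → S.D) (p : S.F) : S.F :=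
  if p = r then r else S.right (succ p)

/-- The descendants of a face `p` in the cotree rooted at `r` (including `p` itself). -/
def descendants (S : CombSurface) (r : S.F) (succ : S.F → S.D) (p : S.F) :
    Finset S.F :=
  univ.filter fun o => ∃ m : ℕ, (parentOfSucc S r succ)^[m] o = p

/-- The dual flow sending one unit of flow from every face to `r` along the cotree:
on a successor dart `succ p` its value is the number of descendants of `p`, on the
reversal of a successor dart it is the negation of that number, and on darts whose edges
are not in the cotree it is `0`. -/
def treeDrainage (S : CombSurface) (r : S.F) (succ : S.F → S.D) (d : S.D) : ℝ :=
  if ∃ p, p ≠ r ∧ succ p = d then ((descendants S r succ (S.left d)).card : ℝ)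
  else if ∃ p, p ≠ r ∧ succ p = S.rev d then
    -((descendants S r succ (S.left (S.rev d))).card : ℝ)
  else 0

/-- `RedOf S pred v u x`: in the tree rooted at `v` with predecessor darts `pred`, the
tree path from `v` to `x` passes through `u` (when `pred u` is the dart `v→u`, this says
exactly that the tree path from `v` to `x` uses the dart `v→u`, i.e. `x` is red). -/
def RedOf (S : CombSurface) (pred : S.V → S.D) (v u x : S.V) : Prop :=
  ∃ m : ℕ, (fun y => if y = v then v else S.tail (pred y))^[m] x = u

/-- The darts of the tree determined by the predecessor darts `pred` (both orientations
of each tree edge). -/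
def predDarts (S : CombSurface) (pred : S.V → S.D) (v : S.V) : Set S.D :=
  {d | ∃ x, x ≠ v ∧ (pred x = d ∨ pred x = S.rev d)}

/-- A shortest path tree rooted at `v` with respect to vector-valued dart costs `cost`,
together with the (lexicographic) shortest path distances: every non-root vertex has a
tense predecessor dart, all darts have non-negative slack, and the predecessor darts form
a tree reaching back to the root. -/
structure SPTree (S : CombSurface) {n : ℕ} (cost : S.D → Fin n → ℝ) (v : S.V) where
  pred : S.V → S.D
  dist : S.V → Fin n → ℝ
  dist_root : dist v = 0
  pred_head : ∀ x, x ≠ v → S.head (pred x) = x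
  pred_tense : ∀ x, x ≠ v → dist x = dist (S.tail (pred x)) + cost (pred x)
  slack_nonneg : ∀ d, lexLe (dist (S.head d)) (dist (S.tail d) + cost d)
  reach : ∀ x, ∃ m : ℕ, (fun y => if y = v then v else S.tail (pred y))^[m] x = v

namespace SPTree

variable {S : CombSurface} {n : ℕ} {cost : S.D → Fin n → ℝ} {v : S.V}

/-- The slack of a dart: `slack(x→y) = dist(x) + cost(x→y) − dist(y)`. -/
def slack (T : SPTree S cost v) (d : S.D) : Fin n → ℝ :=
  T.dist (S.tail d) + cost d - T.dist (S.head d)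

/-- A vertex `x` is red if the tree path from the root `v` to `x` uses the dart `v→u`;
here `u` is the head of that dart. -/
def Red (T : SPTree S cost v) (u x : S.V) : Prop := RedOf S T.pred v u x

/-- A dart is active if its tail is blue and its head is red. -/
def Active (T : SPTree S cost v) (u : S.V) (d : S.D) : Prop :=
  ¬ T.Red u (S.tail d) ∧ T.Red u (S.head d)

/-- The darts of the shortest path tree (both orientations of each tree edge). -/
def treeDarts (T : SPTree S cost v) : Set S.D := predDarts S T.pred v

end SPTree

/-- `K` realizes the fundamental cycle of the dart `d` with the tree whose darts are
`TD`: the concatenation `d :: K` is a simple closed walk whose non-`d` darts all lie in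
the tree. -/
def IsFundCycleWalk (S : CombSurface) (TD : Set S.D) (d : S.D) (K : List S.D) : Prop :=
  IsWalk S (S.head d) (S.tail d) K ∧ (∀ e ∈ K, e ∈ TD) ∧ ((d :: K).map S.head).Nodup

/-- The homology signature of the fundamental cycle `d :: K`. -/
def cycleSig (S : CombSurface) (H : HomologyBasis S) (d : S.D) (K : List S.D) :
    Fin (2 * S.g) → ℝ :=
  fun i => (H.cyc i d : ℝ) + (K.map fun e => (H.cyc i e : ℝ)).sum

/-- `Y` is a subgraph of the cut graph `X` in which every incident dual vertex other than
`q` and `r` has degree at least 2. -/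
def IsCore (S : CombSurface) (X : Set S.D) (q r : S.F) (Y : Set S.D) : Prop :=
  Y ⊆ X ∧ (∀ d ∈ Y, S.rev d ∈ Y) ∧
    ∀ d ∈ Y, S.left d ≠ q → S.left d ≠ r → ∃ d' ∈ Y, d' ≠ d ∧ S.left d' = S.left d

/-- The 2-core of the cut graph `X` (keeping `q` and `r`): the largest subgraph in which
every dual vertex other than `q` and `r` has degree at least 2; equivalently, the result
of repeatedly deleting degree-1 dual vertices other than `q` and `r`. -/
def twoCore (S : CombSurface) (X : Set S.D) (q r : S.F) : Set S.D :=
  ⋃₀ {Y | IsCore S X q r Y}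

/-- An oriented cut path of the 2-core `X2`: a directed dual path whose darts lie in `X2`
and whose internal dual vertices are not `q` or `r` and have degree exactly 2 in `X2`. -/
def IsCutPath (S : CombSurface) (X2 : Set S.D) (q r : S.F) (P : List S.D) : Prop :=
  (∀ d ∈ P, d ∈ X2) ∧
    P.Chain' fun d₁ d₂ => S.right d₁ = S.left d₂ ∧ S.right d₁ ≠ q ∧ S.right d₁ ≠ r ∧
      ∀ e ∈ X2, S.left e = S.right d₁ → e = S.rev d₁ ∨ e = d₂

/-- `L` is the clockwise facial walk around the face `p` (cyclically closed). -/
def IsFacialCycle (S : CombSurface) (p : S.F) (L : List S.D) : Prop :=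
  L ≠ [] ∧ (∀ d ∈ L, S.left d = p) ∧
    List.Chain' (fun d₁ d₂ => d₂ = S.rev (S.next d₁)) (L ++ L.take 1)

/-- Elementary combinatorial homotopy moves in the surface punctured at the faces `o` and
`r`, where the first endpoint of a walk may additionally slide forward or backward along
the fixed walk `R` (the walk `u₁→u₂→⋯→u_{k-1}`): removal/insertion of a spur, exchanging
two arcs that together bound a face other than `o` and `r`, and sliding the initial
endpoint along `R`. -/
inductive RHStep (S : CombSurface) (o r : S.F) (R : List S.D) :
    List S.D → List S.D → Prop where
  | spur (P Q : List S.D) (d : S.D) :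
      RHStep S o r R (P ++ d :: S.rev d :: Q) (P ++ Q)
  | face (P Q A B : List S.D) (p : S.F) (hpo : p ≠ o) (hpr : p ≠ r)
      (hface : IsFacialCycle S p (A ++ (B.reverse.map S.rev))) :
      RHStep S o r R (P ++ A ++ Q) (P ++ B ++ Q)
  | slide (P : List S.D) (d : S.D) (hd : d ∈ R) :
      RHStep S o r R (d :: P) P

/-- Restricted homotopy of walks with respect to a dart whose left face is `o`: homotopy
in the surface punctured at `o` and `r`, where the first endpoint may move forward or
backward along the walk `R`. -/
def RHomotopic (S : CombSurface) (o r : S.F) (R : List S.D) (P₁ P₂ : List S.D) : Prop :=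
  Relation.EqvGen (RHStep S o r R) P₁ P₂


/-!
Write `par` for the parent map of the rooted cotree and `D(p)` for the descendants of `p`.
Since `succ p` is the only cotree dart leaving `p` towards `r`, the flow `z` is the sum over
faces `p ≠ r` of `|D(p)|` units pushed along `succ p`, so
`∂*z(q) = ∑_{par p = q, p ≠ r} |D(p)| - [q ≠ r] |D(q)|`.
The descendants of `q` are `q` itself together with the disjoint sets `D(p)` of its children,
which gives `-1` at `q ≠ r` and `|F| - 1` at the root, whose descendants are all faces.
Disjointness, and the fact that no successor dart is the reversal of another, both come
from one observation: as every face reaches the fixed point `r` under `par`, `r` is the only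
periodic point of `par`.
-/

section RootedForest

open Function

variable {α : Type*} {f : α → α} {r : α}

theorem eq_of_isPeriodicPt_of_iterate_eq_fixedPt (hr : f r = r) {x : α} {m n : ℕ}
    (hx : f^[m] x = r) (hn : 0 < n) (hp : IsPeriodicPt f n x) : x = r := by
  obtain ⟨k, hk⟩ := Nat.exists_eq_add_of_le (Nat.le_mul_of_pos_left m hn)
  have h := (hp.mul_const m).eq
  rw [hk, add_comm, iterate_add_apply, hx, iterate_fixed hr] at h
  exact h.symm

theorem exists_iterate_eq_iff (hr : f r = r) {o q : α} :
    (∃ m, f^[m] o = q) ↔ o = q ∨ ∃ p, (p ≠ r ∧ f p = q) ∧ ∃ m, f^[m] o = p := by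
  constructor
  · rintro ⟨m, hm⟩
    induction m generalizing q with
    | zero => exact Or.inl hm
    | succ k ih =>
      rw [iterate_succ_apply'] at hm
      by_cases hk : f^[k] o = r
      · exact ih (by rw [← hm, hk, hr])
      · exact Or.inr ⟨_, ⟨hk, hm⟩, k, rfl⟩
  · rintro (rfl | ⟨p, ⟨-, rfl⟩, m, rfl⟩)
    · exact ⟨0, rfl⟩
    · exact ⟨m + 1, iterate_succ_apply' f m o⟩

theorem iterate_apply_ne (hr : f r = r) (hreach : ∀ x, ∃ m, f^[m] x = r) {p : α}
    (hp : p ≠ r) (k : ℕ) : f^[k] (f p) ≠ p := fun hk =>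
  hp (eq_of_isPeriodicPt_of_iterate_eq_fixedPt hr (hreach p).choose_spec k.succ_pos hk)

variable [Fintype α]

theorem disjoint_filter_exists_iterate_eq (hr : f r = r) (hreach : ∀ x, ∃ m, f^[m] x = r)
    {p₁ p₂ : α} (hne : p₁ ≠ p₂) (hp₁ : p₁ ≠ r) (hp₂ : p₂ ≠ r) (hf : f p₁ = f p₂) :
    Disjoint (univ.filter fun o => ∃ m, f^[m] o = p₁)
      (univ.filter fun o => ∃ m, f^[m] o = p₂) := by
  simp only [disjoint_left, mem_filter, mem_univ, true_and]
  rintro o ⟨m₁, hm₁⟩ ⟨m₂, hm₂⟩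
  wlog hle : m₁ ≤ m₂ generalizing p₁ p₂ m₁ m₂
  · exact this hne.symm hp₂ hp₁ hf.symm m₂ hm₂ m₁ hm₁ (le_of_not_ge hle)
  obtain ⟨k, rfl⟩ := Nat.exists_eq_add_of_le hle
  rw [add_comm, iterate_add_apply, hm₁] at hm₂
  cases k with
  | zero => exact hne hm₂
  | succ k =>
    rw [iterate_succ_apply, hf] at hm₂
    exact iterate_apply_ne hr hreach hp₂ k hm₂

theorem card_filter_exists_iterate_eq [DecidableEq α] (hr : f r = r) (hreach : ∀ x, ∃ m, f^[m] x = r)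
    (q : α) :
    (univ.filter fun o => ∃ m, f^[m] o = q).card =
      1 + ∑ p ∈ univ.filter (fun p => p ≠ r ∧ f p = q),
        (univ.filter fun o => ∃ m, f^[m] o = p).card := by
  set children := univ.filter fun p => p ≠ r ∧ f p = q
  set below : α → Finset α := fun p => univ.filter fun o => ∃ m, f^[m] o = p
  have hsplit : below q = insert q (children.biUnion below) := by
    ext o
    simp only [below, children, mem_insert, mem_biUnion, mem_filter, mem_univ, true_and]
    exact exists_iterate_eq_iff hr
  have hq : q ∉ children.biUnion below := by
    simp only [below, children, mem_biUnion, mem_filter, mem_univ, true_and]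
    rintro ⟨p, ⟨hp, rfl⟩, k, hk⟩
    exact iterate_apply_ne hr hreach hp k hk
  have hdisj : (children : Set α).PairwiseDisjoint below := by
    intro p₁ hp₁ p₂ hp₂ hne
    simp only [children, mem_coe, mem_filter, mem_univ, true_and] at hp₁ hp₂
    exact disjoint_filter_exists_iterate_eq hr hreach hne hp₁.1 hp₂.1 (hp₁.2.trans hp₂.2.symm)
  show (below q).card = 1 + ∑ p ∈ children, (below p).card
  rw [hsplit, card_insert_of_notMem hq, card_biUnion hdisj, add_comm]

end RootedForest

namespace CombSurface

variable (S : CombSurface)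

theorem rev_injective : Function.Injective S.rev :=
  Function.LeftInverse.injective S.rev_invol

theorem eq_rev_iff_rev_eq {a b : S.D} : a = S.rev b ↔ S.rev a = b :=
  ⟨fun h => by rw [h, S.rev_invol], fun h => by rw [← h, S.rev_invol]⟩

theorem right_rev (d : S.D) : S.right (S.rev d) = S.left d := by
  rw [right, S.rev_invol]

end CombSurface

def succFlow (S : CombSurface) (r : S.F) (succ : S.F → S.D) (w : S.F → ℝ) (d : S.D) : ℝ :=
  ∑ p ∈ univ.filter (· ≠ r),
    w p * ((if succ p = d then 1 else 0) - (if S.rev (succ p) = d then 1 else 0))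

section SuccFlow

variable {S : CombSurface} {r : S.F} {succ : S.F → S.D}

theorem succFlow_rev (w : S.F → ℝ) (d : S.D) :
    succFlow S r succ w (S.rev d) = -succFlow S r succ w d := by
  rw [succFlow, succFlow, ← sum_neg_distrib]
  refine sum_congr rfl fun p _ => ?_
  rw [if_congr S.eq_rev_iff_rev_eq rfl rfl, if_congr (S.rev_injective.eq_iff) rfl rfl]
  ring

theorem parentOfSucc_root : parentOfSucc S r succ r = r := if_pos rfl

theorem parentOfSucc_of_ne {p : S.F} (hp : p ≠ r) :
    parentOfSucc S r succ p = S.right (succ p) := if_neg hp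

theorem dualImbalance_succFlow (hleft : ∀ p, p ≠ r → S.left (succ p) = p) (w : S.F → ℝ)
    (q : S.F) :
    S.dualImbalance (succFlow S r succ w) q =
      ∑ p ∈ univ.filter (fun p => p ≠ r ∧ parentOfSucc S r succ p = q), w p -
        if q = r then 0 else w q := by
  have per_face : ∀ p ∈ univ.filter (· ≠ r),
      ∑ d ∈ univ.filter (fun d => S.right d = q),
          w p * ((if succ p = d then 1 else 0) - (if S.rev (succ p) = d then 1 else 0)) =
        (if parentOfSucc S r succ p = q then w p else 0) - if p = q then w p else 0 := by
    intro p hp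
    rw [mem_filter] at hp
    rw [← mul_sum, sum_sub_distrib, sum_ite_eq, sum_ite_eq]
    simp only [mem_filter, mem_univ, true_and, S.right_rev, hleft p hp.2,
      parentOfSucc_of_ne hp.2]
    split_ifs <;> ring
  simp only [CombSurface.dualImbalance, succFlow]
  rw [sum_comm, sum_congr rfl per_face, sum_sub_distrib, ← sum_filter, filter_filter,
    sum_ite_eq']
  simp only [mem_filter, mem_univ, true_and, ite_not]

theorem succ_ne_rev_succ (hleft : ∀ p, p ≠ r → S.left (succ p) = p)
    (hreach : ∀ p, ∃ m : ℕ, (parentOfSucc S r succ)^[m] p = r) {p p' : S.F} (hp : p ≠ r)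
    (hp' : p' ≠ r) : succ p ≠ S.rev (succ p') := by
  intro h
  have hpp' : parentOfSucc S r succ p = p' := by
    rw [parentOfSucc_of_ne hp, h, S.right_rev, hleft p' hp']
  have hp'p : parentOfSucc S r succ p' = p := by
    rw [parentOfSucc_of_ne hp', CombSurface.right, ← h, hleft p hp]
  refine hp (eq_of_isPeriodicPt_of_iterate_eq_fixedPt parentOfSucc_root
    (hreach p).choose_spec two_pos ?_)
  show parentOfSucc S r succ (parentOfSucc S r succ p) = p
  rw [hpp', hp'p]

theorem sum_ite_succ_eq (hleft : ∀ p, p ≠ r → S.left (succ p) = p) (w : S.F → ℝ)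
    (d : S.D) :
    ∑ p ∈ univ.filter (· ≠ r), (if succ p = d then w p else 0) =
      if ∃ p, p ≠ r ∧ succ p = d then w (S.left d) else 0 := by
  rw [← sum_filter, filter_filter]
  split_ifs with h
  · obtain ⟨p₀, hp₀, rfl⟩ := h
    rw [hleft p₀ hp₀]
    refine sum_eq_single_of_mem p₀ (by simp [hp₀]) fun p hp hne => ?_
    simp only [mem_filter, mem_univ, true_and] at hp
    exact absurd (by rw [← hleft p hp.1, hp.2, hleft p₀ hp₀]) hne
  · refine sum_eq_zero fun p hp => ?_
    simp only [mem_filter, mem_univ, true_and] at hp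
    exact absurd ⟨p, hp⟩ h

theorem treeDrainage_eq_succFlow (hleft : ∀ p, p ≠ r → S.left (succ p) = p)
    (hreach : ∀ p, ∃ m : ℕ, (parentOfSucc S r succ)^[m] p = r) :
    treeDrainage S r succ = succFlow S r succ fun p => ((descendants S r succ p).card : ℝ) := by
  ext d
  simp only [succFlow, mul_sub, mul_ite, mul_one, mul_zero, sum_sub_distrib,
    ← S.eq_rev_iff_rev_eq, sum_ite_succ_eq hleft, treeDrainage]
  split_ifs with h₁ h₂
  · obtain ⟨p, hp, rfl⟩ := h₁
    obtain ⟨p', hp', h'⟩ := h₂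
    exact absurd h' (succ_ne_rev_succ hleft hreach hp' hp)
  all_goals ring

theorem card_descendants (hreach : ∀ p, ∃ m : ℕ, (parentOfSucc S r succ)^[m] p = r)
    (q : S.F) :
    (descendants S r succ q).card =
      1 + ∑ p ∈ univ.filter (fun p => p ≠ r ∧ parentOfSucc S r succ p = q),
        (descendants S r succ p).card :=
  card_filter_exists_iterate_eq parentOfSucc_root hreach q

theorem descendants_root (hreach : ∀ p, ∃ m : ℕ, (parentOfSucc S r succ)^[m] p = r) :
    descendants S r succ r = univ :=
  eq_univ_of_forall fun p => mem_filter.2 ⟨mem_univ p, hreach p⟩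

end SuccFlow

theorem holiest_treeDrainage_general (S : CombSurface) (C : Finset S.D) (r : S.F)
    (succ : S.F → S.D)
    (hmem : ∀ p, p ≠ r → succ p ∈ C ∧ S.left (succ p) = p)
    (hreach : ∀ p, ∃ m : ℕ, (parentOfSucc S r succ)^[m] p = r) :
    (∀ q, q ≠ r → S.dualImbalance (treeDrainage S r succ) q = -1) ∧
    S.dualImbalance (treeDrainage S r succ) r = (Fintype.card S.F : ℝ) - 1 ∧
    S.IsDrainage (treeDrainage S r succ) r := by
  have hleft : ∀ p, p ≠ r → S.left (succ p) = p := fun p hp => (hmem p hp).2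
  have himb := dualImbalance_succFlow hleft fun p => ((descendants S r succ p).card : ℝ)
  rw [treeDrainage_eq_succFlow hleft hreach]
  have hsource : ∀ q, q ≠ r → S.dualImbalance (succFlow S r succ fun p =>
      ((descendants S r succ p).card : ℝ)) q = -1 := by
    intro q hq
    rw [himb, if_neg hq, card_descendants hreach q]
    push_cast
    ring
  refine ⟨hsource, ?_, succFlow_rev _, fun q hq => by rw [hsource q hq]; norm_num⟩
  have hcard := card_descendants hreach r
  rw [descendants_root hreach, card_univ] at hcard
  rw [himb, if_pos rfl, hcard]
  push_cast
  ring

/-- Let `C` be a spanning cotree of `G` rooted at a face `r`, with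
successor darts `succ` (so `succ p` is the dart of `C` leaving `p` on the dual path from
`p` to `r`), and let `z` be the dual flow defined by: `z(d) = 0` if the edge of `d` is
not in `C`; if `p↑q` is the successor dart of the dual vertex `p`, then `z(p↑q)` equals
the number of descendants of `p` in `C` (including `p` itself), and `z` of its reversal
is the negation of that number.  Then `∂*z(q) = −1` for every face `q ≠ r` and
`∂*z(r) = |F| − 1`; in particular, `z` is a drainage with sink `r`. -/
theorem holiest_treeDrainage (S : CombSurface) (C : Finset S.D) (r : S.F)
    (succ : S.F → S.D)
    (hC : S.IsSpanningCotree C)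
    (hmem : ∀ p, p ≠ r → succ p ∈ C ∧ S.left (succ p) = p)
    (hreach : ∀ p, ∃ m : ℕ, (parentOfSucc S r succ)^[m] p = r)
    (hedges : ∀ d ∈ C, ∃ p, p ≠ r ∧ (succ p = d ∨ succ p = S.rev d)) :
    (∀ q, q ≠ r → S.dualImbalance (treeDrainage S r succ) q = -1) ∧
    S.dualImbalance (treeDrainage S r succ) r = (Fintype.card S.F : ℝ) - 1 ∧
    S.IsDrainage (treeDrainage S r succ) r :=
  holiest_treeDrainage_general S C r succ hmem hreach
end
end

section
/- Suppose a pivot inserts dart d⁺ into the holiest shortest path tree T while removing dart d⁻ (the old predecessor of the head of d⁺). Let d = x→y be any dart such that x turns from red to blue during the pivot while y does not change colors. Then [cycle(T − d⁻ + d⁺, d)] = [cycle(T, d)] + [cycle(T, d⁺)]. -/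
/-!
Common combinatorial framework for graphs cellularly embedded on orientable surfaces,
following Erickson, Fox, and Lkhamsuren, "Holiest Minimum-Cost Paths and Flows in
Surface Graphs".

A graph `G = (V, E, F)` embedded on an orientable surface is given combinatorially by a
finite set of darts together with a fixed-point-free involution `rev` (whose orbits are
the edges) and a permutation `next` (= π, whose orbits are the vertices); the faces are
the orbits of `rev ∘ next`, and the genus `g` is determined by Euler's formula
`|V| - |E| + |F| = 2 - 2g`.
-/

noncomputable section

open Finset

open scoped Classical

set_option maxHeartbeats 1000000

/-!
Let `A` be the subtree of `head d⁺`; it is the same before and after the pivot. Its vertices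
are red before the pivot and blue after it, since afterwards `A` hangs from the blue vertex
`tail d⁺`; so `x ∈ A` and `y ∉ A`. The only dart of the new tree entering `A` is `d⁺`, hence
the new tree path `K'` from `y` to `x` uses `d⁺` once more forwards than backwards. Therefore
the net flow of `K'` minus those of `K`, `Kp` and `[d⁺]` is a circulation supported on `T`, and
a circulation supported on a tree vanishes. Homology signatures are linear in the net flow.
-/
section Iterates

variable {α : Type*}

def Reaches (g : α → α) (w a : α) : Prop := ∃ k, g^[k] w = a

namespace Reaches

variable {g g' : α → α} {w a b : α}

lemma refl (g : α → α) (w : α) : Reaches g w w := ⟨0, rfl⟩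

lemma trans (h₁ : Reaches g w b) (h₂ : Reaches g b a) : Reaches g w a := by
  obtain ⟨k, rfl⟩ := h₁
  obtain ⟨m, rfl⟩ := h₂
  exact ⟨m + k, Function.iterate_add_apply g m k w⟩

lemma of_apply (h : Reaches g (g w) a) : Reaches g w a :=
  trans ⟨1, rfl⟩ h

lemma apply_of_ne (h : Reaches g w a) (hw : w ≠ a) : Reaches g (g w) a := by
  obtain ⟨_ | k, hk⟩ := h
  · exact absurd hk hw
  · exact ⟨k, by rwa [← Function.iterate_succ_apply]⟩

lemma total (h₁ : Reaches g w a) (h₂ : Reaches g w b) : Reaches g a b ∨ Reaches g b a := by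
  obtain ⟨k, rfl⟩ := h₁
  obtain ⟨m, rfl⟩ := h₂
  rcases le_total k m with h | h
  · exact .inl ⟨m - k, by rw [← Function.iterate_add_apply, Nat.sub_add_cancel h]⟩
  · exact .inr ⟨k - m, by rw [← Function.iterate_add_apply, Nat.sub_add_cancel h]⟩

lemma eq_of_isFixedPt (hv : g b = b) (h : Reaches g b a) : a = b := by
  obtain ⟨k, rfl⟩ := h
  exact Function.iterate_fixed hv k

lemma eq_of_apply_reaches (hv : g b = b) (hw : Reaches g w b) (h : Reaches g (g w) w) :
    w = b := by
  obtain ⟨m, hm⟩ := hw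
  obtain ⟨k, hk⟩ := h
  have hper : Function.IsPeriodicPt g ((k + 1) * m) w :=
    Function.IsPeriodicPt.mul_const ((Function.iterate_succ_apply g k w).trans hk) m
  calc w = g^[(k + 1) * m] w := hper.symm
    _ = g^[k * m] (g^[m] w) := by rw [← Function.iterate_add_apply, add_mul, one_mul]
    _ = b := by rw [hm, Function.iterate_fixed hv]

lemma iterate_eq_of_not_reaches (hgg' : ∀ x ≠ a, g x = g' x) (hw : ¬ Reaches g w a)
    (k : ℕ) : g^[k] w = g'^[k] w := by
  induction k generalizing w with
  | zero => rfl
  | succ k ih =>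
    have hwa : w ≠ a := fun h => hw (h ▸ refl g w)
    rw [Function.iterate_succ_apply, Function.iterate_succ_apply, ← hgg' w hwa,
      ih (fun h => hw h.of_apply)]

lemma iff_of_not_reaches (hgg' : ∀ x ≠ a, g x = g' x) (hw : ¬ Reaches g w a) :
    Reaches g w b ↔ Reaches g' w b := by
  simp only [Reaches, iterate_eq_of_not_reaches hgg' hw]

lemma iff_of_eq_off (hgg' : ∀ x ≠ a, g x = g' x) : Reaches g w a ↔ Reaches g' w a :=
  ⟨fun h => by_contra fun h' =>
      h' ((iff_of_not_reaches (fun x hx => (hgg' x hx).symm) h').mpr h),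
    fun h => by_contra fun h' => h' ((iff_of_not_reaches hgg' h').mpr h)⟩

end Reaches

end Iterates

namespace CombSurface

variable (S : CombSurface)

@[simp]
lemma head_rev (d : S.D) : S.head (S.rev d) = S.tail d := rfl

@[simp]
lemma tail_rev (d : S.D) : S.tail (S.rev d) = S.head d := by
  rw [tail, rev_invol]

lemma rev_eq_iff {d e : S.D} : S.rev d = e ↔ d = S.rev e :=
  ⟨fun h => h ▸ (S.rev_invol d).symm, fun h => h ▸ S.rev_invol e⟩

end CombSurface

def parentMap (S : CombSurface) (pred : S.V → S.D) (v : S.V) : S.V → S.V :=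
  fun y => if y = v then v else S.tail (pred y)

section PredTree

variable {S : CombSurface} {pred : S.V → S.D} {v : S.V}

lemma parentMap_root : parentMap S pred v v = v := if_pos rfl

lemma parentMap_of_ne {y : S.V} (hy : y ≠ v) : parentMap S pred v y = S.tail (pred y) :=
  if_neg hy

lemma parentMap_update_of_ne {a y : S.V} (e : S.D) (hy : y ≠ a) :
    parentMap S (Function.update pred a e) v y = parentMap S pred v y := by
  simp only [parentMap, Function.update_of_ne hy]

lemma head_update_pred (hhead : ∀ x, x ≠ v → S.head (pred x) = x) {e : S.D} :
    ∀ x, x ≠ v → S.head (Function.update pred (S.head e) e x) = x := by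
  intro x hx
  rcases eq_or_ne x (S.head e) with rfl | hxe
  · rw [Function.update_self]
  · rw [Function.update_of_ne hxe, hhead x hx]

lemma rev_mem_predDarts {e : S.D} (he : e ∈ predDarts S pred v) :
    S.rev e ∈ predDarts S pred v := by
  obtain ⟨w, hwv, h | h⟩ := he
  · exact ⟨w, hwv, .inr (by rw [S.rev_invol, h])⟩
  · exact ⟨w, hwv, .inl h⟩

lemma mem_predDarts_update {a : S.V} {e₀ e : S.D}
    (he : e ∈ predDarts S (Function.update pred a e₀) v) :
    e ∈ predDarts S pred v ∨ e = e₀ ∨ e = S.rev e₀ := by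
  obtain ⟨w, hwv, h⟩ := he
  rcases eq_or_ne w a with rfl | hwa
  · rw [Function.update_self] at h
    rcases h with h | h
    · exact .inr (.inl h.symm)
    · exact .inr (.inr (S.rev_eq_iff.mp h.symm))
  · rw [Function.update_of_ne hwa] at h
    exact .inl ⟨w, hwv, h⟩

lemma eq_pred_of_enters_subtree (hhead : ∀ x, x ≠ v → S.head (pred x) = x) {a : S.V}
    {e : S.D} (he : e ∈ predDarts S pred v)
    (hin : Reaches (parentMap S pred v) (S.head e) a)
    (hout : ¬ Reaches (parentMap S pred v) (S.tail e) a) : e = pred a := by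
  obtain ⟨w, hwv, h | h⟩ := he
  · subst h
    rw [hhead w hwv] at hin
    rw [← parentMap_of_ne hwv] at hout
    by_contra hwa
    exact hout (hin.apply_of_ne fun h => hwa (h ▸ rfl))
  · obtain rfl : e = S.rev (pred w) := by rw [h, S.rev_invol]
    rw [S.head_rev, ← parentMap_of_ne hwv] at hin
    rw [S.tail_rev, hhead w hwv] at hout
    exact absurd hin.of_apply hout

end PredTree

section Flows

variable {S : CombSurface}

def netFlow (S : CombSurface) (W : List S.D) (e : S.D) : ℝ :=
  (W.count e : ℝ) - (W.count (S.rev e) : ℝ)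

def inflow (S : CombSurface) (A : S.V → Prop) (g : S.D → ℝ) : ℝ :=
  ∑ e ∈ univ.filter (fun e => A (S.head e)), g e

lemma netFlow_rev (W : List S.D) (e : S.D) : netFlow S W (S.rev e) = -netFlow S W e := by
  simp only [netFlow, S.rev_invol, neg_sub]

lemma netFlow_eq_zero {X : Set S.D} (hX : ∀ e ∈ X, S.rev e ∈ X) {W : List S.D}
    (hW : ∀ e ∈ W, e ∈ X) {e : S.D} (he : e ∉ X) : netFlow S W e = 0 := by
  have hrev : S.rev e ∉ X := fun h => he (S.rev_invol e ▸ hX _ h)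
  simp only [netFlow, List.count_eq_zero.mpr (mt (hW e) he),
    List.count_eq_zero.mpr (mt (hW _) hrev), sub_self]

lemma sum_map_eq_sum_count (φ : S.D → ℝ) (W : List S.D) :
    (W.map φ).sum = ∑ e, (W.count e : ℝ) * φ e := by
  rw [Finset.sum_list_map_count]
  refine Finset.sum_subset (Finset.subset_univ _) (fun e _ he => ?_) |>.trans ?_
  · rw [List.count_eq_zero.mpr (fun h => he (List.mem_toFinset.mpr h)), nsmul_eq_mul,
      Nat.cast_zero, zero_mul]
  · simp only [nsmul_eq_mul]

lemma sum_netFlow_mul (φ : S.D → ℝ) (W : List S.D) :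
    ∑ e, netFlow S W e * φ e = (W.map fun e => φ e - φ (S.rev e)).sum := by
  have hrev : ∑ e, (W.count (S.rev e) : ℝ) * φ e = ∑ e, (W.count e : ℝ) * φ (S.rev e) := by
    refine Fintype.sum_bijective S.rev (Function.Involutive.bijective S.rev_invol) _ _ ?_
    intro e
    rw [S.rev_invol]
  simp only [sum_map_eq_sum_count, netFlow, sub_mul, mul_sub, Finset.sum_sub_distrib, hrev]

lemma two_mul_sum_map_eq_sum_netFlow_mul {φ : S.D → ℝ} (hφ : ∀ e, φ (S.rev e) = -φ e)
    (W : List S.D) : 2 * (W.map φ).sum = ∑ e, netFlow S W e * φ e := by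
  simp only [sum_netFlow_mul, hφ, sub_neg_eq_add, ← two_mul, List.sum_map_mul_left]

lemma sum_map_sub_of_isWalk (χ : S.V → ℝ) :
    ∀ {a b : S.V} {W : List S.D}, IsWalk S a b W →
      (W.map fun e => χ (S.head e) - χ (S.tail e)).sum = χ b - χ a
  | _, _, [], rfl => by simp
  | _, _, _ :: _, ⟨rfl, hW⟩ => by
    rw [List.map_cons, List.sum_cons, sum_map_sub_of_isWalk χ hW]
    ring

lemma inflow_netFlow_of_isWalk (A : S.V → Prop) {a b : S.V} {W : List S.D}
    (hW : IsWalk S a b W) :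
    inflow S A (netFlow S W) = (if A b then 1 else 0) - (if A a then 1 else 0) := by
  have h := sum_netFlow_mul (fun e => if A (S.head e) then (1 : ℝ) else 0) W
  simp only [mul_ite, mul_one, mul_zero, S.head_rev] at h
  rw [← sum_map_sub_of_isWalk (fun w => if A w then 1 else 0) hW, inflow,
    Finset.sum_filter]
  exact h

/-- Darts with both ends in `A` cancel in pairs. -/
lemma inflow_eq_sum_entering {g : S.D → ℝ} (hg : ∀ e, g (S.rev e) = -g e) (A : S.V → Prop) :
    inflow S A g = ∑ e ∈ univ.filter (fun e => A (S.head e) ∧ ¬ A (S.tail e)), g e := by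
  rw [inflow, ← Finset.sum_filter_add_sum_filter_not _ (fun e => A (S.tail e)),
    Finset.filter_filter, Finset.filter_filter,
    Finset.sum_involution (fun e _ => S.rev e), zero_add]
  · intro e _; rw [hg, add_neg_cancel]
  · intro e _ _; exact S.rev_ne e
  · intro e he
    simp_all
  · intro e _; exact S.rev_invol e

lemma mem_of_netFlow_ne_zero {X : Set S.D} (hX : ∀ e ∈ X, S.rev e ∈ X) {W : List S.D}
    (hW : ∀ e ∈ W, e ∈ X) {e : S.D} (he : netFlow S W e ≠ 0) : e ∈ X :=
  by_contra fun h => he (netFlow_eq_zero hX hW h)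

lemma netFlow_eq_one_of_enters {X : Set S.D} (hX : ∀ e ∈ X, S.rev e ∈ X) {A : S.V → Prop}
    {e₀ : S.D} (h₀ : A (S.head e₀) ∧ ¬ A (S.tail e₀))
    (henter : ∀ e ∈ X, A (S.head e) → ¬ A (S.tail e) → e = e₀)
    {a b : S.V} {W : List S.D} (hW : IsWalk S a b W) (hWX : ∀ e ∈ W, e ∈ X)
    (ha : ¬ A a) (hb : A b) : netFlow S W e₀ = 1 := by
  have h := inflow_netFlow_of_isWalk A hW
  rw [if_pos hb, if_neg ha, sub_zero, inflow_eq_sum_entering (netFlow_rev W) A,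
    Finset.sum_eq_single_of_mem e₀ (by simpa using h₀)] at h
  · exact h
  · intro e he hne
    by_contra hne0
    simp only [Finset.mem_filter, Finset.mem_univ, true_and] at he
    exact hne (henter e (mem_of_netFlow_ne_zero hX hWX hne0) he.1 he.2)

end Flows

section TreeCirculation

variable {S : CombSurface} {pred : S.V → S.D} {v : S.V}

/-- The inflow into the subtree of `x` is carried by the single dart `pred x`. -/
lemma eq_zero_of_inflow_eq_zero (hhead : ∀ x, x ≠ v → S.head (pred x) = x)
    (hreach : ∀ x, Reaches (parentMap S pred v) x v)
    {g : S.D → ℝ} (hg : ∀ e, g (S.rev e) = -g e) (hin : ∀ A, inflow S A g = 0)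
    (hsupp : ∀ e, g e ≠ 0 → e ∈ predDarts S pred v) (e : S.D) : g e = 0 := by
  have hpred : ∀ x, x ≠ v → g (pred x) = 0 := by
    intro x hxv
    have hacyc : ¬ Reaches (parentMap S pred v) (parentMap S pred v x) x :=
      fun h => hxv (Reaches.eq_of_apply_reaches parentMap_root (hreach x) h)
    rw [← hin (fun w => Reaches (parentMap S pred v) w x), inflow_eq_sum_entering hg]
    refine (Finset.sum_eq_single_of_mem (pred x) ?_ fun e he hne => ?_).symm
    · simpa [hhead x hxv, ← parentMap_of_ne hxv] using ⟨Reaches.refl _ x, hacyc⟩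
    · by_contra hge
      simp only [Finset.mem_filter, Finset.mem_univ, true_and] at he
      exact hne (eq_pred_of_enters_subtree hhead (hsupp e hge) he.1 he.2)
  by_contra hge
  obtain ⟨w, hwv, h | h⟩ := hsupp e hge
  · exact hge (h ▸ hpred w hwv)
  · exact hge (by rw [← S.rev_invol e, hg, ← h, hpred w hwv, neg_zero])

end TreeCirculation

section Pivot

variable {S : CombSurface} {pred : S.V → S.D} {v : S.V}

lemma reaches_update_iff (a : S.V) (e : S.D) (w : S.V) :
    Reaches (parentMap S (Function.update pred a e) v) w a ↔
      Reaches (parentMap S pred v) w a :=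
  (Reaches.iff_of_eq_off fun _ hx => (parentMap_update_of_ne e hx).symm).symm

lemma reaches_update_iff_of_not_reaches {a : S.V} (e : S.D) {w : S.V}
    (hw : ¬ Reaches (parentMap S pred v) w a) (b : S.V) :
    Reaches (parentMap S (Function.update pred a e) v) w b ↔
      Reaches (parentMap S pred v) w b :=
  (Reaches.iff_of_not_reaches (fun _ hx => (parentMap_update_of_ne e hx).symm) hw).symm

/-- After the pivot the subtree of `head e` hangs from the blue vertex `tail e`. -/
lemma not_reaches_of_reaches_pivot {u : S.V} {e : S.D} (huv : u ≠ v)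
    (hu : parentMap S pred v u = v) (htail : ¬ Reaches (parentMap S pred v) (S.tail e) u)
    (hhead : Reaches (parentMap S pred v) (S.head e) u) (heu : S.head e ≠ u) {w : S.V}
    (hw : Reaches (parentMap S (Function.update pred (S.head e) e) v) w (S.head e)) :
    ¬ Reaches (parentMap S (Function.update pred (S.head e) e) v) w u := by
  have hev : S.head e ≠ v := fun h => huv (Reaches.eq_of_isFixedPt parentMap_root (h ▸ hhead))
  intro hwu
  rcases hw.total hwu with h | h
  · have htail' : ¬ Reaches (parentMap S pred v) (S.tail e) (S.head e) :=
      fun h' => htail (h'.trans hhead)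
    apply htail
    rw [← reaches_update_iff_of_not_reaches e htail' u]
    have := h.apply_of_ne heu
    rwa [parentMap_of_ne hev, Function.update_self] at this
  · rw [reaches_update_iff] at h
    have := h.apply_of_ne heu.symm
    rw [hu] at this
    exact hev (Reaches.eq_of_isFixedPt parentMap_root this)

lemma netFlow_eq_add_of_pivot (hhead : ∀ x, x ≠ v → S.head (pred x) = x)
    (hreach : ∀ x, Reaches (parentMap S pred v) x v) {dplus : S.D}
    (hdplus : dplus ∉ predDarts S pred v) {x y : S.V} {K Kp K' : List S.D}
    (hK : IsWalk S y x K) (hKT : ∀ e ∈ K, e ∈ predDarts S pred v)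
    (hKp : IsWalk S (S.head dplus) (S.tail dplus) Kp)
    (hKpT : ∀ e ∈ Kp, e ∈ predDarts S pred v) (hK' : IsWalk S y x K')
    (hK'T : ∀ e ∈ K', e ∈ predDarts S pred v ∨ e = dplus ∨ e = S.rev dplus)
    (hone : netFlow S K' dplus = 1) (e : S.D) :
    netFlow S K' e = netFlow S K e + netFlow S Kp e + netFlow S [dplus] e := by
  set G : S.D → ℝ := fun e =>
    netFlow S K' e - netFlow S K e - netFlow S Kp e - netFlow S [dplus] e
  have hT : ∀ e ∈ predDarts S pred v, S.rev e ∈ predDarts S pred v :=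
    fun _ => rev_mem_predDarts
  have hGd : G dplus = 0 := by
    simp only [G, hone, netFlow_eq_zero hT hKT hdplus, netFlow_eq_zero hT hKpT hdplus]
    have : S.rev dplus ∉ [dplus] := by simpa using S.rev_ne dplus
    simp [netFlow, List.count_eq_zero.mpr this]
  suffices G e = 0 by simp only [G] at this; linarith
  refine eq_zero_of_inflow_eq_zero hhead hreach (fun e => ?_) (fun A => ?_) (fun e he => ?_) e
  · simp only [G, netFlow_rev]; ring
  · have h₁ := inflow_netFlow_of_isWalk A hK'
    have h₂ := inflow_netFlow_of_isWalk A hK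
    have h₃ := inflow_netFlow_of_isWalk A hKp
    have h₄ := inflow_netFlow_of_isWalk A (show IsWalk S (S.tail dplus) (S.head dplus) [dplus]
      from ⟨rfl, rfl⟩)
    simp only [inflow, G, Finset.sum_sub_distrib] at h₁ h₂ h₃ h₄ ⊢
    linarith
  · by_contra heT
    rcases em (e = dplus ∨ e = S.rev dplus) with (rfl | rfl) | hed
    · exact he hGd
    · exact he (by simp only [G, netFlow_rev] at hGd ⊢; linarith)
    · set X : Set S.D := predDarts S pred v ∪ {dplus, S.rev dplus}
      have hX : ∀ e ∈ X, S.rev e ∈ X := by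
        rintro e (h | rfl | rfl)
        · exact .inl (rev_mem_predDarts h)
        · exact .inr (.inr rfl)
        · exact .inr (.inl (S.rev_invol _))
      have heX : e ∉ X := by
        rintro (h | h | h)
        exacts [heT h, hed (.inl h), hed (.inr h)]
      apply he
      simp only [G, netFlow_eq_zero hX (fun e he => .inl (hKT e he)) heX,
        netFlow_eq_zero hX (fun e he => .inl (hKpT e he)) heX, netFlow_eq_zero hX hK'T heX,
        netFlow_eq_zero (W := [dplus]) hX (by simp [X]) heX, sub_zero]

end Pivot

lemma cycleSig_eq_add_of_netFlow {S : CombSurface} (H : HomologyBasis S) {d dplus : S.D}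
    {K Kp K' : List S.D}
    (h : ∀ e, netFlow S K' e = netFlow S K e + netFlow S Kp e + netFlow S [dplus] e) :
    cycleSig S H d K' = fun i => cycleSig S H d K i + cycleSig S H dplus Kp i := by
  funext i
  have hφ : ∀ e, (H.cyc i (S.rev e) : ℝ) = -(H.cyc i e : ℝ) := by simp [H.cyc_antisym]
  have key : ∑ e, netFlow S K' e * (H.cyc i e : ℝ) =
      ∑ e, (netFlow S K e + netFlow S Kp e + netFlow S [dplus] e) * (H.cyc i e : ℝ) := by
    simp only [h]
  have hsig (W : List S.D) :=
    two_mul_sum_map_eq_sum_netFlow_mul (φ := (H.cyc i · : S.D → ℝ)) hφ W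
  simp only [add_mul, Finset.sum_add_distrib, ← hsig, List.map_singleton,
    List.sum_singleton] at key
  simp only [cycleSig]
  linarith

/-- The pivot replaces `d⁻ = T.pred (head d⁺)` by `d⁺`, so `T − d⁻ + d⁺` has predecessor map
`Function.update T.pred (head d⁺) d⁺`; the fundamental cycles are the closed walks `d :: K'`,
`d :: K` and `d⁺ :: Kp`. -/
theorem holiest_change_homology_general (S : CombSurface) (H : HomologyBasis S) (z : S.D → ℝ)
    (c : S.D → ℝ)
    (duv : S.D) (hne : S.head duv ≠ S.tail duv)
    (lam : Fin (2 * S.g + 2) → ℝ)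
    (T : SPTree S (fun d => if d = duv then lam else dartCostMod S H z c d)
      (S.tail duv))
    (hpredu : T.pred (S.head duv) = duv)
    (dplus : S.D) (hplus : T.Active (S.head duv) dplus)
    (d : S.D)
    (hx_red : T.Red (S.head duv) (S.tail d))
    (hx_blue : ¬ RedOf S (Function.update T.pred (S.head dplus) dplus) (S.tail duv)
      (S.head duv) (S.tail d))
    (hy_same : T.Red (S.head duv) (S.head d) ↔
      RedOf S (Function.update T.pred (S.head dplus) dplus) (S.tail duv)
        (S.head duv) (S.head d))
    (K Kp K' : List S.D)
    (hK : IsFundCycleWalk S T.treeDarts d K)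
    (hKp : IsFundCycleWalk S T.treeDarts dplus Kp)
    (hK' : IsFundCycleWalk S
      (predDarts S (Function.update T.pred (S.head dplus) dplus) (S.tail duv)) d K') :
    cycleSig S H d K' = fun i => cycleSig S H d K i + cycleSig S H dplus Kp i := by
  obtain ⟨htp, hyp⟩ := hplus
  set f' := parentMap S (Function.update T.pred (S.head dplus) dplus) (S.tail duv)
  have hu : parentMap S T.pred (S.tail duv) (S.head duv) = S.tail duv := by
    rw [parentMap_of_ne hne, hpredu]
  have hxA : Reaches f' (S.tail d) (S.head dplus) := by
    by_contra h
    rw [reaches_update_iff] at h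
    exact hx_blue ((reaches_update_iff_of_not_reaches dplus h _).mpr hx_red)
  have hyu : S.head dplus ≠ S.head duv := fun h => hx_blue (h ▸ hxA)
  have hyA : ¬ Reaches f' (S.head d) (S.head dplus) := fun h =>
    not_reaches_of_reaches_pivot hne hu htp hyp hyu h
      (hy_same.mp (((reaches_update_iff _ _ _).mp h).trans hyp))
  have hone : netFlow S K' dplus = 1 := by
    refine netFlow_eq_one_of_enters (A := (Reaches f' · (S.head dplus)))
      (fun _ => rev_mem_predDarts) ⟨Reaches.refl _ _, ?_⟩
      (fun e he hin hout => ?_) hK'.1 hK'.2.1 hyA hxA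
    · rw [reaches_update_iff]; exact fun h => htp (h.trans hyp)
    · simpa using eq_pred_of_enters_subtree (head_update_pred T.pred_head) he hin hout
  have hdplus : dplus ∉ T.treeDarts := fun h =>
    hyu (by rw [eq_pred_of_enters_subtree T.pred_head h hyp htp, T.pred_head _ hne])
  exact cycleSig_eq_add_of_netFlow H (netFlow_eq_add_of_pivot T.pred_head T.reach hdplus
    hK.1 hK.2.1 hKp.1 hKp.2.1 hK'.1 (fun e he => mem_predDarts_update (hK'.2.1 e he)) hone)

/-- Lemma `change_homology` of the paper.  Suppose a pivot inserts the
tense active dart `d⁺` into the holiest shortest path tree `T` while removing the dart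
`d⁻ = pred(head d⁺)` (the old predecessor of the head of `d⁺`), producing the new tree
`T − d⁻ + d⁺` whose predecessor map is `Function.update T.pred (head d⁺) d⁺`.  Let
`d = x→y` be any dart such that `x` turns from red to blue during the pivot while `y`
does not change colors.  Then `[cycle(T − d⁻ + d⁺, d)] = [cycle(T, d)] + [cycle(T, d⁺)]`
(with the fundamental cycles realized by the simple closed walks `d :: K'`, `d :: K`, and
`d⁺ :: Kp` respectively). -/
theorem holiest_change_homology (S : CombSurface) (H : HomologyBasis S) (z : S.D → ℝ)
    (r : S.F) (hz : S.IsDrainage z r) (c : S.D → ℝ)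
    (hpos : ∀ (w : S.V) (P : List S.D), P ≠ [] → IsWalk S w w P → 0 < (P.map c).sum)
    (duv : S.D) (hleft : S.left duv = r) (hne : S.head duv ≠ S.tail duv)
    (lam : Fin (2 * S.g + 2) → ℝ)
    (T : SPTree S (fun d => if d = duv then lam else dartCostMod S H z c d)
      (S.tail duv))
    (hpredu : T.pred (S.head duv) = duv)
    (dplus : S.D) (hplus : T.Active (S.head duv) dplus)
    (htense : T.slack dplus = 0)
    (d : S.D)
    (hx_red : T.Red (S.head duv) (S.tail d))
    (hx_blue : ¬ RedOf S (Function.update T.pred (S.head dplus) dplus) (S.tail duv)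
      (S.head duv) (S.tail d))
    (hy_same : T.Red (S.head duv) (S.head d) ↔
      RedOf S (Function.update T.pred (S.head dplus) dplus) (S.tail duv)
        (S.head duv) (S.head d))
    (K Kp K' : List S.D)
    (hK : IsFundCycleWalk S T.treeDarts d K)
    (hKp : IsFundCycleWalk S T.treeDarts dplus Kp)
    (hK' : IsFundCycleWalk S
      (predDarts S (Function.update T.pred (S.head dplus) dplus) (S.tail duv)) d K') :
    cycleSig S H d K' = fun i => cycleSig S H d K i + cycleSig S H dplus Kp i :=
  holiest_change_homology_general S H z c duv hne lam T hpredu dplus hplus d hx_red hx_blue hy_same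
    K Kp K' hK hKp hK'
end
end
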